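/- arXiv:2404.09079 — 3 statements merged into one kernel-verified Lean document; each statement's English description precedes it below -/
import Mathlib

section
/- Let d ≥ 1, let ν ∈ ℝ^d be a unit vector, and let w be a kernel. Denote by w^c(z) := w(z)·1_{B_1(0)}(z) the truncation of w to the unit ball. Then there exist positive constants c₁ and c₂ depending only on M_w^2 = ∫_{|z|>1} w(z)dz such that for every u ∈ S_w^ν(ℝ^d), c₁ ‖u‖_{S_w^ν(ℝ^d)} ≤ ‖u‖_{S_{w^c}^ν(ℝ^d)} ≤ c₂ ‖u‖_{S_w^ν(ℝ^d)}. In particular, one may take c₂ = (max{2, 1 + 8(M_w^2)²})^{1/2} and c₁ = c₂^{−1}. -/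
open MeasureTheory Filter Topology Metric Set
open scoped ENNReal NNReal RealInnerProductSpace FourierTransform

noncomputable section

abbrev Euc (d : ℕ) := EuclideanSpace ℝ (Fin d)
abbrev EucC (d : ℕ) := EuclideanSpace ℂ (Fin d)

variable {d : ℕ}

/-- Indicator of the half-space `{z | 0 ≤ ⟪z, ν⟫}`. -/
def chiHalf (ν z : Euc d) : ℝ := if 0 ≤ ⟪z, ν⟫ then 1 else 0

/-- `z / ‖z‖`. -/
def dirVec (z : Euc d) : Euc d := ‖z‖⁻¹ • z

/-- Nonlocal half-space divergence of a vector field. -/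
def nlDiv (w : Euc d → ℝ) (ν : Euc d) (φ : Euc d → Euc d) (x : Euc d) : ℝ :=
  ∫ z, chiHalf ν z * ⟪dirVec z, φ (x + z) - φ x⟫ * w z

/-- Nonlocal half-space gradient of a scalar function. -/
def nlGradFun (w : Euc d → ℝ) (ν : Euc d) (u : Euc d → ℝ) (x : Euc d) : Euc d :=
  ∫ z, (chiHalf ν z * (u (x + z) - u x) * w z) • dirVec z

/-- `g` is the distributional nonlocal half-space gradient of `u`. -/
def IsNlGrad (w : Euc d → ℝ) (ν : Euc d) (u : Euc d → ℝ) (g : Euc d → Euc d) : Prop :=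
  ∀ φ : Euc d → Euc d, ContDiff ℝ (⊤ : ℕ∞) φ → HasCompactSupport φ →
    (∫ x, ⟪g x, φ x⟫) = -∫ x, u x * nlDiv w (-ν) φ x

/-- The standing kernel assumptions. -/
structure IsKernel (d : ℕ) (w : Euc d → ℝ) : Prop where
  meas : Measurable w
  nonneg : ∀ z, 0 ≤ w z
  radial : ∀ z z' : Euc d, ‖z‖ = ‖z'‖ → w z = w z'
  locInt : ∀ K : Set (Euc d), IsCompact K → (0 : Euc d) ∉ K → IntegrableOn w K
  m1_pos : 0 < ∫⁻ z in {z : Euc d | ‖z‖ ≤ 1}, ENNReal.ofReal (‖z‖ * w z)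
  m1_fin : (∫⁻ z in {z : Euc d | ‖z‖ ≤ 1}, ENNReal.ofReal (‖z‖ * w z)) < ⊤
  m2_fin : (∫⁻ z in {z : Euc d | 1 < ‖z‖}, ENNReal.ofReal (w z)) < ⊤

/-- Nonintegrability of the kernel near the origin. -/
def NonIntegrable (w : Euc d → ℝ) : Prop :=
  (∫⁻ z in {z : Euc d | ‖z‖ < 1}, ENNReal.ofReal (w z)) = ⊤

/-- The radial profile of `w` is nonincreasing. -/
def RadialAntitone (w : Euc d → ℝ) : Prop :=
  ∀ z z' : Euc d, ‖z‖ ≤ ‖z'‖ → w z' ≤ w z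

/-- `u` vanishes a.e. outside `Ω`. -/
def ZeroOutside (Ω : Set (Euc d)) (u : Euc d → ℝ) : Prop :=
  ∀ᵐ x ∂(volume : Measure (Euc d)), x ∉ Ω → u x = 0

/-- The sequence of restrictions of `u n` to `Ω` is precompact in `L²(Ω)`. -/
def L2PrecompactOn (Ω : Set (Euc d)) (u : ℕ → Euc d → ℝ) : Prop :=
  ∀ φ : ℕ → ℕ, StrictMono φ → ∃ ψ : ℕ → ℕ, StrictMono ψ ∧
    ∃ v : Euc d → ℝ, MemLp v 2 (volume.restrict Ω) ∧
      Tendsto (fun k => eLpNorm (fun x => u (φ (ψ k)) x - v x) 2 (volume.restrict Ω))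
        atTop (𝓝 0)

/-- `v` is an `L²(Ω)`-limit point of the sequence `u`. -/
def L2LimitPointOn (Ω : Set (Euc d)) (u : ℕ → Euc d → ℝ) (v : Euc d → ℝ) : Prop :=
  ∃ φ : ℕ → ℕ, StrictMono φ ∧
    Tendsto (fun k => eLpNorm (fun x => u (φ k) x - v x) 2 (volume.restrict Ω)) atTop (𝓝 0)

/-- Divergence of a vector field. -/
def divg (φ : Euc d → Euc d) (x : Euc d) : ℝ :=
  ∑ i, fderiv ℝ φ x (EuclideanSpace.single i 1) i

/-- `g` is the distributional (weak) gradient of `u`. -/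
def IsWeakGrad (u : Euc d → ℝ) (g : Euc d → Euc d) : Prop :=
  ∀ φ : Euc d → Euc d, ContDiff ℝ (⊤ : ℕ∞) φ → HasCompactSupport φ →
    (∫ x, ⟪g x, φ x⟫) = -∫ x, u x * divg φ x

/-- Near each boundary point, after a rigid motion, `Ω` is the region above the graph of
a function belonging to the class `P`. -/
def HasGraphBoundary (hd : 0 < d)
    (P : (EuclideanSpace ℝ {i : Fin d // i ≠ ⟨0, hd⟩} → ℝ) → Prop)
    (Ω : Set (Euc d)) : Prop :=
  ∀ x ∈ frontier Ω, ∃ r : ℝ, 0 < r ∧ ∃ σ : Euc d ≃ᵢ Euc d,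
    ∃ f : EuclideanSpace ℝ {i : Fin d // i ≠ ⟨0, hd⟩} → ℝ, P f ∧
      ∀ y ∈ Metric.ball x r, (y ∈ Ω ↔ f (WithLp.toLp 2 (fun i : {i : Fin d // i ≠ ⟨0, hd⟩} => σ y i.1)) < σ y ⟨0, hd⟩)

def HasContinuousBoundary (hd : 0 < d) (Ω : Set (Euc d)) : Prop :=
  HasGraphBoundary hd (fun f => Continuous f) Ω

def HasLipschitzBoundary (hd : 0 < d) (Ω : Set (Euc d)) : Prop :=
  HasGraphBoundary hd (fun f => ∃ L : ℝ≥0, LipschitzWith L f) Ω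

/-- A bounded polygonal set: the boundary is contained in finitely many hyperplanes. -/
def IsPolygonal (Ω : Set (Euc d)) : Prop :=
  ∃ S : Finset (Euc d × ℝ), (∀ p ∈ S, p.1 ≠ 0) ∧
    frontier Ω ⊆ ⋃ p ∈ S, {x : Euc d | ⟪p.1, x⟫ = p.2}

def toC (v : Euc d) : EucC d := WithLp.toLp 2 (fun i => (v i : ℂ))

/-- The Fourier symbol `λ_w^ν(ξ)` of the nonlocal half-space gradient. -/
def nlSymb (w : Euc d → ℝ) (ν ξ : Euc d) : EucC d :=
  ∫ z, (((chiHalf ν z * w z : ℝ) : ℂ) *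
    (Complex.exp (((2 * Real.pi * ⟪ξ, z⟫ : ℝ) : ℂ) * Complex.I) - 1)) • toC (dirVec z)

/-- Real part of the Fourier symbol. -/
def nlSymbRe (w : Euc d → ℝ) (ν ξ : Euc d) : Euc d := WithLp.toLp 2 (fun i => (nlSymb w ν ξ i).re)

/-- Imaginary part of the Fourier symbol. -/
def nlSymbIm (w : Euc d → ℝ) (ν ξ : Euc d) : Euc d := WithLp.toLp 2 (fun i => (nlSymb w ν ξ i).im)

/-- Indicator of the ball `B_R(0)`. -/
def ballIndR (R : ℝ) (z : Euc d) : ℝ := if ‖z‖ < R then 1 else 0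

/-- The symbol `η_τ(ξ)`. -/
def etaSymb (ν : Euc d) (τ : ℝ) (ξ : Euc d) : EucC d :=
  ∫ z, (((chiHalf ν z * ballIndR 1 z : ℝ) : ℂ) *
    (Complex.exp ((((-2) * Real.pi * (τ * ⟪ξ, z⟫) : ℝ) : ℂ) * Complex.I) - 1)) • toC (dirVec z)

/-- `U` is the (L², distributional) Fourier transform of `u`. -/
def IsFourierOf (u : Euc d → ℝ) (U : Euc d → ℂ) : Prop :=
  MemLp U 2 (volume : Measure (Euc d)) ∧
  ∀ φ : SchwartzMap (Euc d) ℂ,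
    (∫ ξ, U ξ * φ ξ) = ∫ x, (u x : ℂ) * (𝓕 (fun y => φ y) x)

/-- Bounded measurable symmetric uniformly elliptic matrix coefficient. -/
structure IsCoeff (d : ℕ) (A : Euc d → Fin d → Fin d → ℝ) (μ : ℝ) : Prop where
  meas : ∀ i j, Measurable fun x => A x i j
  bdd : ∃ C : ℝ, ∀ x i j, |A x i j| ≤ C
  symm : ∀ x i j, A x i j = A x j i
  pos : 0 < μ
  ellip : ∀ (x ξ : Euc d), μ * ‖ξ‖ ^ 2 ≤ ∑ i, ∑ j, ξ i * A x i j * ξ j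

/-- The bilinear form `∫ A g · h`. -/
def bform (A : Euc d → Fin d → Fin d → ℝ) (g h : Euc d → Euc d) : ℝ :=
  ∫ x, ∑ i, (∑ j, A x i j * g x j) * h x i

/-- `u` (with nonlocal gradient `gu`) solves the nonlocal Dirichlet problem on `Ω`
with coefficient `A` and right hand side `f`. -/
def IsNlStateSol (wk : Euc d → ℝ) (ν : Euc d) (A : Euc d → Fin d → Fin d → ℝ)
    (Ω : Set (Euc d)) (f : Euc d → ℝ) (u : Euc d → ℝ) (gu : Euc d → Euc d) : Prop :=
  MemLp u 2 (volume : Measure (Euc d)) ∧ ZeroOutside Ω u ∧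
    MemLp gu 2 (volume : Measure (Euc d)) ∧ IsNlGrad wk ν u gu ∧
    ∀ v hv, MemLp v 2 (volume : Measure (Euc d)) → ZeroOutside Ω v →
      MemLp hv 2 (volume : Measure (Euc d)) → IsNlGrad wk ν v hv →
      bform A gu hv = ∫ x in Ω, f x * v x

/-- `u` (with weak gradient `gu`) solves the local Dirichlet problem on `Ω`. -/
def IsLocStateSol (A : Euc d → Fin d → Fin d → ℝ) (Ω : Set (Euc d))
    (f : Euc d → ℝ) (u : Euc d → ℝ) (gu : Euc d → Euc d) : Prop :=
  MemLp u 2 (volume : Measure (Euc d)) ∧ ZeroOutside Ω u ∧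
    MemLp gu 2 (volume : Measure (Euc d)) ∧ IsWeakGrad u gu ∧
    ∀ v hv, MemLp v 2 (volume : Measure (Euc d)) → ZeroOutside Ω v →
      MemLp hv 2 (volume : Measure (Euc d)) → IsWeakGrad v hv →
      (∫ x in Ω, ∑ i, (∑ j, A x i j * gu x j) * hv x i) = ∫ x in Ω, f x * v x

/-- Rescaled kernel `w_δ(z) = δ^{-d-1} w(z/δ)`. -/
def ScaledKernel (w : Euc d → ℝ) (δ : ℝ) : Euc d → ℝ :=
  fun z => (δ ^ (d + 1))⁻¹ * w (δ⁻¹ • z)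

/-- The fractional kernel `w_δ(z) = 2dδ |z|^{δ-d-1}`. -/
def FracKernel (d : ℕ) (δ : ℝ) : Euc d → ℝ :=
  fun z => 2 * d * δ * ‖z‖ ^ (δ - d - 1 : ℝ)

/-- The two defining limit conditions for a vanishing-horizon family. -/
def KernelLimits (W : ℝ → Euc d → ℝ) : Prop :=
  (∀ R : ℝ, 0 < R →
    Tendsto (fun δ => ∫ z in {z : Euc d | R < ‖z‖}, W δ z) (𝓝[>] (0 : ℝ)) (𝓝 0)) ∧
  (∀ R : ℝ, 0 < R →
    Tendsto (fun δ => ∫ z in {z : Euc d | ‖z‖ < R}, ‖z‖ * W δ z) (𝓝[>] (0 : ℝ)) (𝓝 (2 * d)))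

/-- Case (III) of the vanishing-horizon assumption. -/
def CaseIIIFamily (W : ℝ → Euc d → ℝ) : Prop :=
  (∀ δ ∈ Set.Ioo (0 : ℝ) 1, IsKernel d (W δ)) ∧ KernelLimits W ∧
  (∃ R₁ : ℝ, 0 < R₁ ∧ ∃ R₂ : ℝ, 0 < R₂ ∧ ∃ δ₀ ∈ Set.Ioo (0 : ℝ) 1, ∃ h : ℝ → ℝ,
    (∀ δ ∈ Set.Ioo (0 : ℝ) δ₀, 0 < h δ) ∧ Tendsto h (𝓝[>] (0 : ℝ)) (𝓝 0) ∧
    Tendsto (fun δ => ∫ z in {z : Euc d | R₁ * h δ < ‖z‖}, W δ z) (𝓝[>] (0 : ℝ)) atTop ∧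
    (∃ M₀ : ℝ, ∀ δ ∈ Set.Ioo (0 : ℝ) δ₀,
      (∫ z in {z : Euc d | ‖z‖ < R₂}, ‖z‖ ^ 2 * W δ z) ≤ h δ * M₀)) ∧
  (d = 1 → ∀ δ ∈ Set.Ioo (0 : ℝ) 1, RadialAntitone (W δ))

/-- The vanishing-horizon assumption (Assumption 3.6): one of three cases. -/
def VanishingHorizon (W : ℝ → Euc d → ℝ) : Prop :=
  (∃ w : Euc d → ℝ, IsKernel d w ∧ (∫ z, ‖z‖ * w z) = 2 * d ∧
    ∀ δ ∈ Set.Ioo (0 : ℝ) 1, W δ = ScaledKernel w δ) ∨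
  (∀ δ ∈ Set.Ioo (0 : ℝ) 1, W δ = FracKernel d δ) ∨
  CaseIIIFamily W

/-- Membership in the admissible control set `Z_ad`. -/
def InZad (Ω : Set (Euc d)) (α β g : Euc d → ℝ) : Prop :=
  MemLp g 2 (volume.restrict Ω) ∧
    ∀ᵐ x ∂(volume.restrict Ω), α x ≤ g x ∧ g x ≤ β x

/-- Structural conditions on the integrand `F`. -/
structure FCond (Ω : Set (Euc d)) (F : Euc d → ℝ → ℝ) : Prop where
  meas : ∀ ξ : ℝ, Measurable fun x => F x ξ
  convex : ∀ᵐ x ∂(volume.restrict Ω), ConvexOn ℝ Set.univ (F x) ∧ Continuous (F x)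
  growth : ∃ c₁ : ℝ, 0 < c₁ ∧ ∃ ℓ : Euc d → ℝ, IntegrableOn ℓ Ω ∧
    ∀ᵐ x ∂(volume.restrict Ω), ∀ ξ : ℝ, |F x ξ| ≤ c₁ * ξ ^ 2 + ℓ x
  lower : ∃ c dd : Euc d → ℝ, IntegrableOn c Ω ∧ MemLp dd 2 (volume.restrict Ω) ∧
    ∀ᵐ x ∂(volume.restrict Ω), ∀ ξ : ℝ, c x + dd x * ξ ≤ F x ξ
  deriv : ∃ Fd : Euc d → ℝ → ℝ,
    (∀ᵐ x ∂(volume.restrict Ω), Continuous (Fd x) ∧ ∀ ξ : ℝ, HasDerivAt (F x) (Fd x ξ) ξ) ∧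
    ∃ c₂ : ℝ, 0 < c₂ ∧ ∃ e : Euc d → ℝ, MemLp e 2 (volume.restrict Ω) ∧
      ∀ᵐ x ∂(volume.restrict Ω), ∀ ξ : ℝ, |Fd x ξ| ≤ c₂ * |ξ| + e x

/-- The objective functional `I(u,g)`. -/
def objFun (Ω : Set (Euc d)) (F : Euc d → ℝ → ℝ) (lam : ℝ) (Γ : Euc d → ℝ)
    (u g : Euc d → ℝ) : ℝ :=
  (∫ x in Ω, F x (u x)) + lam / 2 * ∫ x in Ω, Γ x * g x ^ 2

-- aux
lemma norm_toC (v : Euc d) : ‖toC v‖ = ‖v‖ := by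
  rw [EuclideanSpace.norm_eq, EuclideanSpace.norm_eq]
  simp [toC]

lemma norm_dirVec_le (z : Euc d) : ‖dirVec z‖ ≤ 1 := by
  rcases eq_or_ne z 0 with h | h
  · simp [dirVec, h]
  · rw [dirVec, norm_smul, norm_inv, norm_norm, inv_mul_cancel₀ (norm_ne_zero_iff.mpr h)]

def nlInt (w : Euc d → ℝ) (ν ξ : Euc d) (z : Euc d) : EucC d :=
  (((chiHalf ν z * w z : ℝ) : ℂ) *
    (Complex.exp (((2 * Real.pi * ⟪ξ, z⟫ : ℝ) : ℂ) * Complex.I) - 1)) • toC (dirVec z)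

lemma nlSymb_eq (w : Euc d → ℝ) (ν ξ : Euc d) : nlSymb w ν ξ = ∫ z, nlInt w ν ξ z := rfl

lemma abs_chiHalf_le (ν z : Euc d) : |chiHalf ν z| ≤ 1 := by
  unfold chiHalf; split <;> simp

lemma norm_nlInt_le (w : Euc d → ℝ) (ν ξ z : Euc d) : ‖nlInt w ν ξ z‖ ≤ 2 * |w z| := by
  unfold nlInt
  rw [norm_smul, norm_mul, norm_toC]
  have h1 : ‖((chiHalf ν z * w z : ℝ) : ℂ)‖ ≤ |w z| := by
    rw [Complex.norm_real, Real.norm_eq_abs, abs_mul]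
    calc |chiHalf ν z| * |w z| ≤ 1 * |w z| :=
          mul_le_mul_of_nonneg_right (abs_chiHalf_le ν z) (abs_nonneg _)
      _ = |w z| := one_mul _
  have h2 : ‖Complex.exp (((2 * Real.pi * ⟪ξ, z⟫ : ℝ) : ℂ) * Complex.I) - 1‖ ≤ 2 := by
    calc ‖Complex.exp (((2 * Real.pi * ⟪ξ, z⟫ : ℝ) : ℂ) * Complex.I) - 1‖
        ≤ ‖Complex.exp (((2 * Real.pi * ⟪ξ, z⟫ : ℝ) : ℂ) * Complex.I)‖ + ‖(1 : ℂ)‖ :=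
          norm_sub_le _ _
      _ = 2 := by rw [Complex.norm_exp_ofReal_mul_I, norm_one]; norm_num
  calc ‖((chiHalf ν z * w z : ℝ) : ℂ)‖ *
        ‖Complex.exp (((2 * Real.pi * ⟪ξ, z⟫ : ℝ) : ℂ) * Complex.I) - 1‖ * ‖dirVec z‖
      ≤ |w z| * 2 * 1 :=
        mul_le_mul (mul_le_mul h1 h2 (norm_nonneg _) (abs_nonneg _)) (norm_dirVec_le z)
          (norm_nonneg _) (by positivity)
    _ = 2 * |w z| := by ring

lemma nlInt_add_kernel (v1 v2 : Euc d → ℝ) (ν ξ z : Euc d) :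
    nlInt (fun z => v1 z + v2 z) ν ξ z = nlInt v1 ν ξ z + nlInt v2 ν ξ z := by
  unfold nlInt
  rw [← add_smul]
  congr 1
  push_cast
  ring

lemma nlInt_congr_pt (v1 v2 : Euc d → ℝ) (ν ξ z : Euc d) (h : v1 z = v2 z) :
    nlInt v1 ν ξ z = nlInt v2 ν ξ z := by unfold nlInt; rw [h]

lemma measurable_chiHalf (ν : Euc d) : Measurable (chiHalf ν) := by
  unfold chiHalf
  exact Measurable.ite
    (measurableSet_le measurable_const (continuous_id.inner continuous_const).measurable)
    measurable_const measurable_const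

def toCL : Euc d →ₗ[ℝ] EucC d where
  toFun := toC
  map_add' x y := by ext i; simp [toC]
  map_smul' a x := by ext i; simp [toC, Complex.real_smul]

lemma aesm_nlInt (w : Euc d → ℝ) (hw : Measurable w) (ν ξ : Euc d) :
    AEStronglyMeasurable (nlInt w ν ξ) volume := by
  apply StronglyMeasurable.aestronglyMeasurable
  apply StronglyMeasurable.smul (f := fun z : Euc d => (((chiHalf ν z * w z : ℝ) : ℂ) *
      (Complex.exp (((2 * Real.pi * ⟪ξ, z⟫ : ℝ) : ℂ) * Complex.I) - 1)))
    (g := fun z => toC (dirVec z))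
  · apply Measurable.stronglyMeasurable
    apply Measurable.mul
    · exact Complex.measurable_ofReal.comp ((measurable_chiHalf ν).mul hw)
    · have : Continuous fun z : Euc d =>
          Complex.exp (((2 * Real.pi * ⟪ξ, z⟫ : ℝ) : ℂ) * Complex.I) - 1 := by
        exact (Complex.continuous_exp.comp ((Complex.continuous_ofReal.comp
          (continuous_const.mul (continuous_const.inner continuous_id))).mul
          continuous_const)).sub continuous_const
      exact this.measurable
  · have hdir : Measurable (dirVec (d := d)) :=
      (measurable_norm.inv).smul measurable_id
    exact ((toCL (d := d)).continuous_of_finiteDimensional).comp_stronglyMeasurable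
      hdir.stronglyMeasurable


lemma symb_diff_bound {d : ℕ} (hd : 0 < d) (ν : Euc d) (w : Euc d → ℝ) (hw : IsKernel d w)
    (ξ : Euc d) :
    ‖nlSymb w ν ξ - nlSymb (fun z => w z * ballIndR 1 z) ν ξ‖ ≤
      2 * ∫ z in {z : Euc d | 1 < ‖z‖}, w z := by
  haveI : Nontrivial (Euc d) := by
    apply Module.nontrivial_of_finrank_pos (R := ℝ)
    rw [finrank_euclideanSpace_fin]; exact hd
  set S : Set (Euc d) := {z | 1 < ‖z‖} with hS
  have hSmeas : MeasurableSet S := measurableSet_lt measurable_const measurable_norm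
  set wt : Euc d → ℝ := S.indicator w with hwtdef
  have hwt_nonneg : ∀ z, 0 ≤ wt z := fun z => Set.indicator_nonneg (fun y _ => hw.nonneg y) z
  have hwt_meas : Measurable wt := hw.meas.indicator hSmeas
  have hwt_int : Integrable wt := by
    rw [hwtdef, integrable_indicator_iff hSmeas]
    refine ⟨hw.meas.aestronglyMeasurable.restrict, ?_⟩
    show (∫⁻ z in S, ‖w z‖ₑ) < ⊤
    calc (∫⁻ z in S, ‖w z‖ₑ) = ∫⁻ z in S, ENNReal.ofReal (w z) :=
          lintegral_congr fun z => Real.enorm_eq_ofReal (hw.nonneg z)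
      _ < ⊤ := hw.m2_fin
  have hM : (∫ z, wt z) = ∫ z in S, w z := integral_indicator hSmeas
  have hMnonneg : 0 ≤ ∫ z in S, w z :=
    setIntegral_nonneg hSmeas fun z _ => hw.nonneg z
  have htail_bound : ∀ z, ‖nlInt wt ν ξ z‖ ≤ 2 * wt z := by
    intro z
    have h := norm_nlInt_le wt ν ξ z
    rwa [abs_of_nonneg (hwt_nonneg z)] at h
  have h2wt_int : Integrable (fun z => 2 * wt z) := hwt_int.const_mul 2
  have htail_int : Integrable (nlInt wt ν ξ) :=
    Integrable.mono' h2wt_int (aesm_nlInt wt hwt_meas ν ξ)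
      (Filter.Eventually.of_forall htail_bound)
  have htail_norm : ‖∫ z, nlInt wt ν ξ z‖ ≤ 2 * ∫ z in S, w z := by
    calc ‖∫ z, nlInt wt ν ξ z‖ ≤ ∫ z, 2 * wt z :=
        norm_integral_le_of_norm_le h2wt_int (Filter.Eventually.of_forall htail_bound)
      _ = 2 * ∫ z, wt z := integral_const_mul 2 wt
      _ = 2 * ∫ z in S, w z := by rw [hM]
  have hsplit : ∀ᵐ z ∂(volume : Measure (Euc d)),
      nlInt w ν ξ z = nlInt (fun z => w z * ballIndR 1 z) ν ξ z + nlInt wt ν ξ z := by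
    have hsph : (volume : Measure (Euc d)) (Metric.sphere (0 : Euc d) 1) = 0 :=
      Measure.addHaar_sphere volume 0 1
    filter_upwards [compl_mem_ae_iff.mpr hsph] with z hz
    have hz1 : ‖z‖ ≠ 1 := by
      simpa [Metric.mem_sphere, dist_zero_right] using hz
    have hdec : w z = w z * ballIndR 1 z + wt z := by
      rcases lt_trichotomy ‖z‖ 1 with h | h | h
      · have : z ∉ S := by simp [hS]; linarith
        simp [ballIndR, h, hwtdef, Set.indicator_of_notMem this]
      · exact absurd h hz1
      · have : z ∈ S := h
        simp [ballIndR, not_lt.mpr h.le, hwtdef, Set.indicator_of_mem this]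
    calc nlInt w ν ξ z
        = nlInt (fun y => w y * ballIndR 1 y + wt y) ν ξ z :=
          nlInt_congr_pt _ _ _ _ _ hdec
      _ = nlInt (fun y => w y * ballIndR 1 y) ν ξ z + nlInt wt ν ξ z :=
          nlInt_add_kernel _ _ _ _ _
  have hsplit' : nlInt w ν ξ =ᵐ[(volume : Measure (Euc d))]
      fun z => nlInt (fun z => w z * ballIndR 1 z) ν ξ z + nlInt wt ν ξ z := hsplit
  by_cases hc : Integrable (nlInt (fun z => w z * ballIndR 1 z) ν ξ)
  · have hw_int : Integrable (nlInt w ν ξ) := (hc.add htail_int).congr hsplit'.symm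
    have heq : nlSymb w ν ξ =
        nlSymb (fun z => w z * ballIndR 1 z) ν ξ + ∫ z, nlInt wt ν ξ z := by
      rw [nlSymb_eq, nlSymb_eq, integral_congr_ae hsplit, integral_add hc htail_int]
    rw [heq, add_sub_cancel_left]
    exact htail_norm
  · have hw_nint : ¬ Integrable (nlInt w ν ξ) := by
      intro h
      apply hc
      have h2 : Integrable (fun z => nlInt w ν ξ z - nlInt wt ν ξ z) := h.sub htail_int
      apply h2.congr
      filter_upwards [hsplit] with z hz
      rw [hz]; abel
    rw [nlSymb_eq, nlSymb_eq, integral_undef hw_nint, integral_undef hc]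
    simpa using by linarith


/-- Lemma 2.5: equivalence of the `S_w^ν` and `S_{w^c}^ν` norms,
expressed through the Fourier characterization `‖u‖² = ∫ (1+|λ_w^ν|²)|û|²`. -/
theorem equiv_norm_trunc_w {d : ℕ} (hd : 0 < d) (ν : Euc d) (hν : ‖ν‖ = 1)
    (w : Euc d → ℝ) (hw : IsKernel d w) :
    ∃ c₁ c₂ : ℝ, 0 < c₁ ∧ 0 < c₂ ∧
      c₂ = Real.sqrt (max 2 (1 + 8 * (∫ z in {z : Euc d | 1 < ‖z‖}, w z) ^ 2)) ∧
      c₁ = c₂⁻¹ ∧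
      ∀ (u : Euc d → ℝ) (U : Euc d → ℂ),
        MemLp u 2 (volume : Measure (Euc d)) → IsFourierOf u U →
        (∫⁻ ξ : Euc d, (1 + (‖nlSymb w ν ξ‖₊ : ℝ≥0∞) ^ 2) * (‖U ξ‖₊ : ℝ≥0∞) ^ 2) < ⊤ →
        ENNReal.ofReal (c₁ ^ 2) *
            (∫⁻ ξ : Euc d, (1 + (‖nlSymb w ν ξ‖₊ : ℝ≥0∞) ^ 2) * (‖U ξ‖₊ : ℝ≥0∞) ^ 2) ≤
          (∫⁻ ξ : Euc d,
            (1 + (‖nlSymb (fun z => w z * ballIndR 1 z) ν ξ‖₊ : ℝ≥0∞) ^ 2) *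
              (‖U ξ‖₊ : ℝ≥0∞) ^ 2) ∧
        (∫⁻ ξ : Euc d,
            (1 + (‖nlSymb (fun z => w z * ballIndR 1 z) ν ξ‖₊ : ℝ≥0∞) ^ 2) *
              (‖U ξ‖₊ : ℝ≥0∞) ^ 2) ≤
          ENNReal.ofReal (c₂ ^ 2) *
            (∫⁻ ξ : Euc d, (1 + (‖nlSymb w ν ξ‖₊ : ℝ≥0∞) ^ 2) * (‖U ξ‖₊ : ℝ≥0∞) ^ 2) := by
    classical
  set M : ℝ := ∫ z in {z : Euc d | 1 < ‖z‖}, w z with hM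
  have hMnonneg : 0 ≤ M :=
    setIntegral_nonneg (measurableSet_lt measurable_const measurable_norm)
      fun z _ => hw.nonneg z
  set C : ℝ := max 2 (1 + 8 * M ^ 2) with hC
  have hC2 : (2 : ℝ) ≤ C := le_max_left _ _
  have hC1 : 1 + 8 * M ^ 2 ≤ C := le_max_right _ _
  have hCpos : (0 : ℝ) < C := lt_of_lt_of_le two_pos hC2
  have hsq : Real.sqrt C ^ 2 = C := Real.sq_sqrt hCpos.le
  have hsqpos : 0 < Real.sqrt C := Real.sqrt_pos.mpr hCpos
  refine ⟨(Real.sqrt C)⁻¹, Real.sqrt C, inv_pos.mpr hsqpos, hsqpos, rfl, rfl, ?_⟩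
  intro u U hu hU hfin
  have hdiff : ∀ ξ : Euc d,
      ‖nlSymb w ν ξ - nlSymb (fun z => w z * ballIndR 1 z) ν ξ‖ ≤ 2 * M :=
    fun ξ => symb_diff_bound hd ν w hw ξ
  have habs : ∀ ξ : Euc d,
      |‖nlSymb w ν ξ‖ - ‖nlSymb (fun z => w z * ballIndR 1 z) ν ξ‖| ≤ 2 * M :=
    fun ξ => (abs_norm_sub_norm_le _ _).trans (hdiff ξ)
  have key : ∀ a b : ℝ, 0 ≤ a → 0 ≤ b → |a - b| ≤ 2 * M →
      (1 + (ENNReal.ofReal a) ^ 2) ≤ ENNReal.ofReal C * (1 + (ENNReal.ofReal b) ^ 2) := by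
    intro a b ha hb h
    rw [← ENNReal.ofReal_pow ha, ← ENNReal.ofReal_pow hb, ← ENNReal.ofReal_one,
      ← ENNReal.ofReal_add zero_le_one (by positivity),
      ← ENNReal.ofReal_add zero_le_one (by positivity),
      ← ENNReal.ofReal_mul hCpos.le]
    apply ENNReal.ofReal_le_ofReal
    have h' : a ≤ b + 2 * M := by
      rcases abs_le.mp h with ⟨h1, h2⟩; linarith
    nlinarith [sq_nonneg (b - 2 * M), sq_nonneg b, hC1, hC2,
      mul_le_mul h' h' ha (by positivity : (0:ℝ) ≤ b + 2 * M),
      mul_nonneg (by linarith : (0:ℝ) ≤ C - 2) (sq_nonneg b)]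
  have hnn : ∀ x : EucC d, ((‖x‖₊ : ℝ≥0∞)) = ENNReal.ofReal ‖x‖ :=
    fun x => (ofReal_norm x).symm
  have hpt1 : ∀ ξ : Euc d,
      (1 + (‖nlSymb w ν ξ‖₊ : ℝ≥0∞) ^ 2) * (‖U ξ‖₊ : ℝ≥0∞) ^ 2 ≤
        ENNReal.ofReal C *
          ((1 + (‖nlSymb (fun z => w z * ballIndR 1 z) ν ξ‖₊ : ℝ≥0∞) ^ 2) *
            (‖U ξ‖₊ : ℝ≥0∞) ^ 2) := by
    intro ξ
    rw [← mul_assoc]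
    apply mul_le_mul_left
    rw [hnn, hnn]
    exact key _ _ (norm_nonneg _) (norm_nonneg _) (habs ξ)
  have hpt2 : ∀ ξ : Euc d,
      (1 + (‖nlSymb (fun z => w z * ballIndR 1 z) ν ξ‖₊ : ℝ≥0∞) ^ 2) *
          (‖U ξ‖₊ : ℝ≥0∞) ^ 2 ≤
        ENNReal.ofReal C *
          ((1 + (‖nlSymb w ν ξ‖₊ : ℝ≥0∞) ^ 2) * (‖U ξ‖₊ : ℝ≥0∞) ^ 2) := by
    intro ξ
    rw [← mul_assoc]
    apply mul_le_mul_left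
    rw [hnn, hnn]
    refine key _ _ (norm_nonneg _) (norm_nonneg _) ?_
    rw [abs_sub_comm]
    exact habs ξ
  constructor
  · have h1 : (∫⁻ ξ : Euc d, (1 + (‖nlSymb w ν ξ‖₊ : ℝ≥0∞) ^ 2) * (‖U ξ‖₊ : ℝ≥0∞) ^ 2) ≤
        ENNReal.ofReal C *
          ∫⁻ ξ : Euc d,
            (1 + (‖nlSymb (fun z => w z * ballIndR 1 z) ν ξ‖₊ : ℝ≥0∞) ^ 2) *
              (‖U ξ‖₊ : ℝ≥0∞) ^ 2 := by
      calc (∫⁻ ξ : Euc d, (1 + (‖nlSymb w ν ξ‖₊ : ℝ≥0∞) ^ 2) * (‖U ξ‖₊ : ℝ≥0∞) ^ 2)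
          ≤ ∫⁻ ξ : Euc d, ENNReal.ofReal C *
              ((1 + (‖nlSymb (fun z => w z * ballIndR 1 z) ν ξ‖₊ : ℝ≥0∞) ^ 2) *
                (‖U ξ‖₊ : ℝ≥0∞) ^ 2) := lintegral_mono hpt1
        _ = _ := lintegral_const_mul' _ _ ENNReal.ofReal_ne_top
    calc ENNReal.ofReal (((Real.sqrt C)⁻¹) ^ 2) *
          (∫⁻ ξ : Euc d, (1 + (‖nlSymb w ν ξ‖₊ : ℝ≥0∞) ^ 2) * (‖U ξ‖₊ : ℝ≥0∞) ^ 2)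
        = ENNReal.ofReal C⁻¹ *
            (∫⁻ ξ : Euc d, (1 + (‖nlSymb w ν ξ‖₊ : ℝ≥0∞) ^ 2) * (‖U ξ‖₊ : ℝ≥0∞) ^ 2) := by
          rw [inv_pow, hsq]
      _ ≤ ENNReal.ofReal C⁻¹ * (ENNReal.ofReal C *
            ∫⁻ ξ : Euc d,
              (1 + (‖nlSymb (fun z => w z * ballIndR 1 z) ν ξ‖₊ : ℝ≥0∞) ^ 2) *
                (‖U ξ‖₊ : ℝ≥0∞) ^ 2) := mul_le_mul_right h1 _
      _ = (ENNReal.ofReal C⁻¹ * ENNReal.ofReal C) *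
            ∫⁻ ξ : Euc d,
              (1 + (‖nlSymb (fun z => w z * ballIndR 1 z) ν ξ‖₊ : ℝ≥0∞) ^ 2) *
                (‖U ξ‖₊ : ℝ≥0∞) ^ 2 := (mul_assoc _ _ _).symm
      _ = _ := by
          rw [← ENNReal.ofReal_mul (by positivity), inv_mul_cancel₀ (ne_of_gt hCpos),
            ENNReal.ofReal_one, one_mul]
  · calc (∫⁻ ξ : Euc d,
          (1 + (‖nlSymb (fun z => w z * ballIndR 1 z) ν ξ‖₊ : ℝ≥0∞) ^ 2) *
            (‖U ξ‖₊ : ℝ≥0∞) ^ 2)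
        ≤ ∫⁻ ξ : Euc d, ENNReal.ofReal C *
            ((1 + (‖nlSymb w ν ξ‖₊ : ℝ≥0∞) ^ 2) * (‖U ξ‖₊ : ℝ≥0∞) ^ 2) :=
          lintegral_mono hpt2
      _ = ENNReal.ofReal C *
            ∫⁻ ξ : Euc d, (1 + (‖nlSymb w ν ξ‖₊ : ℝ≥0∞) ^ 2) * (‖U ξ‖₊ : ℝ≥0∞) ^ 2 :=
          lintegral_const_mul' _ _ ENNReal.ofReal_ne_top
      _ = _ := by rw [hsq]

end
end

section
/- Let d ≥ 2 and let μ = (μ₁,…,μ_d) ∈ S^{d−1} with μ₁ > 0. Then there exist unit vectors v₁,…,v_{d−1} ∈ S^{d−1} such that v_k·e₁ ≥ 0 for all 1 ≤ k ≤ d−1 and v₁,…,v_{d−1}, μ form an orthonormal basis of ℝ^d. Moreover, the v_k may be chosen so that v_k·e₁ = μ₁|μ_{k+1}| / (√(μ₁²+⋯+μ_k²) · √(μ₁²+⋯+μ_{k+1}²)) for every 1 ≤ k ≤ d−1. -/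
open MeasureTheory Filter Topology
open scoped RealInnerProductSpace

noncomputable section

section OrthoAux
open Finset

variable (d : ℕ) (μ' : ℕ → ℝ)

def auxQ (n : ℕ) : ℝ := ∑ j ∈ Finset.range d, if j < n then μ' j ^ 2 else 0

def auxw (K j : ℕ) : ℝ :=
  (if 0 ≤ μ' (K + 1) then 1 else -1) *
    (if j ≤ K then μ' j * μ' (K + 1) / (Real.sqrt (auxQ d μ' (K + 1)) * Real.sqrt (auxQ d μ' (K + 2)))
     else if j = K + 1 then -(Real.sqrt (auxQ d μ' (K + 1)) / Real.sqrt (auxQ d μ' (K + 2))) else 0)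

variable {d μ'}

lemma auxQ_pos (hd : 0 < d) (h0 : 0 < μ' 0) {n : ℕ} (hn : 1 ≤ n) : 0 < auxQ d μ' n := by
  have h : (if (0:ℕ) < n then μ' 0 ^ 2 else 0) ≤ auxQ d μ' n := by
    apply Finset.single_le_sum (f := fun j => if j < n then μ' j ^ 2 else 0)
    · intro i _; positivity
    · simpa using hd
  rw [if_pos (show 0 < n by omega)] at h
  nlinarith

lemma auxQ_succ {n : ℕ} (hn : n < d) : auxQ d μ' (n + 1) = auxQ d μ' n + μ' n ^ 2 := by
  unfold auxQ
  have : ∀ j ∈ Finset.range d, (if j < n + 1 then μ' j ^ 2 else 0)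
      = (if j < n then μ' j ^ 2 else 0) + (if j = n then μ' j ^ 2 else 0) := by
    intro j _; split_ifs <;> first | omega | ring
  rw [Finset.sum_congr rfl this, Finset.sum_add_distrib,
    Finset.sum_ite_eq' (Finset.range d) n (fun j => μ' j ^ 2), if_pos (Finset.mem_range.mpr hn)]

lemma sum_le_eq (K : ℕ) (c : ℝ) :
    ∑ j ∈ Finset.range d, (if j ≤ K then μ' j ^ 2 * c else 0) = auxQ d μ' (K + 1) * c := by
  unfold auxQ
  rw [Finset.sum_mul]
  apply Finset.sum_congr rfl
  intro j _
  split_ifs <;> first | omega | ring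

lemma sum_point (K : ℕ) (hK : K + 1 < d) (f : ℕ → ℝ) :
    ∑ j ∈ Finset.range d, (if j = K + 1 then f j else 0) = f (K + 1) := by
  rw [Finset.sum_ite_eq' (Finset.range d) (K+1) f, if_pos (Finset.mem_range.mpr hK)]

lemma auxw_norm (h0 : 0 < μ' 0) {K : ℕ} (hK : K + 1 < d) :
    ∑ j ∈ Finset.range d, auxw d μ' K j * auxw d μ' K j = 1 := by
  have hd : 0 < d := by omega
  have h1 : 0 < auxQ d μ' (K + 1) := auxQ_pos hd h0 (by omega)
  have h2 : 0 < auxQ d μ' (K + 2) := auxQ_pos hd h0 (by omega)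
  have hs1 : Real.sqrt (auxQ d μ' (K + 1)) ^ 2 = auxQ d μ' (K + 1) := Real.sq_sqrt h1.le
  have hs2 : Real.sqrt (auxQ d μ' (K + 2)) ^ 2 = auxQ d μ' (K + 2) := Real.sq_sqrt h2.le
  have hs1p : 0 < Real.sqrt (auxQ d μ' (K + 1)) := Real.sqrt_pos.mpr h1
  have hs2p : 0 < Real.sqrt (auxQ d μ' (K + 2)) := Real.sqrt_pos.mpr h2
  have hrec : auxQ d μ' (K + 2) = auxQ d μ' (K + 1) + μ' (K + 1) ^ 2 := auxQ_succ (by omega)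
  set s1 := Real.sqrt (auxQ d μ' (K + 1))
  set s2 := Real.sqrt (auxQ d μ' (K + 2))
  have hpt : ∀ j ∈ Finset.range d, auxw d μ' K j * auxw d μ' K j =
      (if j ≤ K then μ' j ^ 2 * (μ' (K+1) ^ 2 / (s1 * s2) ^ 2) else 0)
        + (if j = K + 1 then s1 ^ 2 / s2 ^ 2 else 0) := by
    intro j _
    unfold auxw
    split_ifs <;> first | omega | ring
  rw [Finset.sum_congr rfl hpt, Finset.sum_add_distrib, sum_le_eq, sum_point K hK]
  have : (s1 * s2) ^ 2 = auxQ d μ' (K + 1) * auxQ d μ' (K + 2) := by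
    rw [mul_pow, hs1, hs2]
  rw [this, hs1, hs2]
  field_simp
  nlinarith [h1, h2]

lemma auxw_mu (h0 : 0 < μ' 0) {K : ℕ} (hK : K + 1 < d) :
    ∑ j ∈ Finset.range d, auxw d μ' K j * μ' j = 0 := by
  have hd : 0 < d := by omega
  have h1 : 0 < auxQ d μ' (K + 1) := auxQ_pos hd h0 (by omega)
  have h2 : 0 < auxQ d μ' (K + 2) := auxQ_pos hd h0 (by omega)
  have hs1 : Real.sqrt (auxQ d μ' (K + 1)) ^ 2 = auxQ d μ' (K + 1) := Real.sq_sqrt h1.le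
  have hs1p : 0 < Real.sqrt (auxQ d μ' (K + 1)) := Real.sqrt_pos.mpr h1
  have hs2p : 0 < Real.sqrt (auxQ d μ' (K + 2)) := Real.sqrt_pos.mpr h2
  set s := (if 0 ≤ μ' (K + 1) then (1:ℝ) else -1) with hs
  set s1 := Real.sqrt (auxQ d μ' (K + 1))
  set s2 := Real.sqrt (auxQ d μ' (K + 2))
  have hpt : ∀ j ∈ Finset.range d, auxw d μ' K j * μ' j =
      (if j ≤ K then μ' j ^ 2 * (s * μ' (K+1) / (s1 * s2)) else 0)
        + (if j = K + 1 then s * (-(s1 / s2)) * μ' j else 0) := by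
    intro j _
    unfold auxw
    rw [← hs]
    split_ifs <;> first | omega | ring
  rw [Finset.sum_congr rfl hpt, Finset.sum_add_distrib, sum_le_eq, sum_point K hK, ← hs1]
  field_simp
  ring

lemma auxw_orth (h0 : 0 < μ' 0) {K L : ℕ} (hKL : K < L) (hL : L + 1 < d) :
    ∑ j ∈ Finset.range d, auxw d μ' K j * auxw d μ' L j = 0 := by
  have hd : 0 < d := by omega
  have h1 : 0 < auxQ d μ' (K + 1) := auxQ_pos hd h0 (by omega)
  have h2 : 0 < auxQ d μ' (K + 2) := auxQ_pos hd h0 (by omega)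
  have h3 : 0 < auxQ d μ' (L + 1) := auxQ_pos hd h0 (by omega)
  have h4 : 0 < auxQ d μ' (L + 2) := auxQ_pos hd h0 (by omega)
  have hs1 : Real.sqrt (auxQ d μ' (K + 1)) ^ 2 = auxQ d μ' (K + 1) := Real.sq_sqrt h1.le
  have hs1p : 0 < Real.sqrt (auxQ d μ' (K + 1)) := Real.sqrt_pos.mpr h1
  have hs2p : 0 < Real.sqrt (auxQ d μ' (K + 2)) := Real.sqrt_pos.mpr h2
  have ht1p : 0 < Real.sqrt (auxQ d μ' (L + 1)) := Real.sqrt_pos.mpr h3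
  have ht2p : 0 < Real.sqrt (auxQ d μ' (L + 2)) := Real.sqrt_pos.mpr h4
  set sK := (if 0 ≤ μ' (K + 1) then (1:ℝ) else -1) with hsK
  set sL := (if 0 ≤ μ' (L + 1) then (1:ℝ) else -1) with hsL
  set s1 := Real.sqrt (auxQ d μ' (K + 1))
  set s2 := Real.sqrt (auxQ d μ' (K + 2))
  set t1 := Real.sqrt (auxQ d μ' (L + 1))
  set t2 := Real.sqrt (auxQ d μ' (L + 2))
  have hpt : ∀ j ∈ Finset.range d, auxw d μ' K j * auxw d μ' L j =
      (if j ≤ K then μ' j ^ 2 * (sK * μ' (K+1) / (s1 * s2) * (sL * μ' (L+1) / (t1 * t2))) else 0)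
        + (if j = K + 1 then sK * (-(s1 / s2)) * (sL * (μ' j * μ' (L+1) / (t1 * t2))) else 0) := by
    intro j _
    unfold auxw
    rw [← hsK, ← hsL]
    split_ifs <;> first | omega | ring
  rw [Finset.sum_congr rfl hpt, Finset.sum_add_distrib, sum_le_eq, sum_point K (by omega), ← hs1]
  field_simp
  ring

lemma auxw_zero (K : ℕ) : auxw d μ' K 0 =
    μ' 0 * |μ' (K + 1)| / (Real.sqrt (auxQ d μ' (K + 1)) * Real.sqrt (auxQ d μ' (K + 2))) := by
  unfold auxw
  rw [if_pos (Nat.zero_le K)]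
  split_ifs with h
  · rw [abs_of_nonneg h]; ring
  · rw [abs_of_neg (lt_of_not_ge h)]; ring

end OrthoAux

/-- Proposition A.2: completion of a unit vector `μ` with positive first
coordinate to an orthonormal basis `v₁, …, v_{d-1}, μ` of `ℝ^d` in which the first
coordinates of the `v_k` are nonnegative and given by an explicit formula. -/
theorem orthobasis_with_mu {d : ℕ} (hd : 2 ≤ d) (μ : Euc d) (hμ : ‖μ‖ = 1)
    (hμ1 : 0 < μ ⟨0, by omega⟩) :
    ∃ v : Fin (d - 1) → Euc d,
      (∀ k, ‖v k‖ = 1) ∧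
      (∀ k, 0 ≤ v k ⟨0, by omega⟩) ∧
      Orthonormal ℝ (fun i : Fin d => if h : (i : ℕ) < d - 1 then v ⟨i, h⟩ else μ) ∧
      Submodule.span ℝ
        (Set.range (fun i : Fin d => if h : (i : ℕ) < d - 1 then v ⟨i, h⟩ else μ)) = ⊤ ∧
      ∀ k : Fin (d - 1),
        v k ⟨0, by omega⟩ =
          μ ⟨0, by omega⟩ * |μ ⟨(k : ℕ) + 1, by have := k.isLt; omega⟩| /
            (Real.sqrt (∑ j : Fin d, if (j : ℕ) ≤ (k : ℕ) then μ j ^ 2 else 0) *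
             Real.sqrt (∑ j : Fin d, if (j : ℕ) ≤ (k : ℕ) + 1 then μ j ^ 2 else 0)) := by
  have hd0 : 0 < d := by omega
  set μ' : ℕ → ℝ := fun n => if h : n < d then μ ⟨n, h⟩ else 0 with hμ'
  have hμ'eq : ∀ j : Fin d, μ' (j : ℕ) = μ j := by
    intro j; simp [hμ', j.isLt]
  have h0 : 0 < μ' 0 := by
    have := hμ'eq ⟨0, hd0⟩
    rw [this]; exact hμ1
  set v : Fin (d - 1) → Euc d := fun k => (WithLp.toLp 2 (fun j : Fin d => auxw d μ' k j) : EuclideanSpace ℝ (Fin d)) with hv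
  -- inner product computations
  have hvv : ∀ k l : Fin (d - 1), ⟪v k, v l⟫ =
      ∑ j ∈ Finset.range d, auxw d μ' k j * auxw d μ' l j := by
    intro k l
    simp only [hv, PiLp.inner_apply, RCLike.inner_apply, conj_trivial]
    rw [← Fin.sum_univ_eq_sum_range (fun n => auxw d μ' k n * auxw d μ' l n) d]
    exact Finset.sum_congr rfl fun j _ => mul_comm _ _
  have hvμ : ∀ k : Fin (d - 1), ⟪v k, μ⟫ = 0 := by
    intro k
    have : ⟪v k, μ⟫ = ∑ j ∈ Finset.range d, auxw d μ' k j * μ' j := by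
      simp only [hv, PiLp.inner_apply, RCLike.inner_apply, conj_trivial]
      rw [← Fin.sum_univ_eq_sum_range (fun n => auxw d μ' k n * μ' n) d]
      exact Finset.sum_congr rfl fun j _ => by rw [hμ'eq j, mul_comm]
    rw [this]
    exact auxw_mu h0 (by have := k.isLt; omega)
  have hnorm : ∀ k : Fin (d - 1), ‖v k‖ = 1 := by
    intro k
    have h1 : ⟪v k, v k⟫ = 1 := by
      rw [hvv]; exact auxw_norm h0 (by have := k.isLt; omega)
    rw [real_inner_self_eq_norm_sq] at h1
    rw [← Real.sqrt_sq (norm_nonneg (v k)), h1, Real.sqrt_one]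
  have hμμ : ⟪μ, μ⟫ = 1 := by
    rw [real_inner_self_eq_norm_sq, hμ]; norm_num
  -- orthonormality
  have horth : Orthonormal ℝ (fun i : Fin d => if h : (i : ℕ) < d - 1 then v ⟨i, h⟩ else μ) := by
    rw [orthonormal_iff_ite]
    intro i j
    by_cases hi : (i : ℕ) < d - 1 <;> by_cases hj : (j : ℕ) < d - 1 <;>
      simp only [hi, hj, dif_pos, dif_neg, not_false_iff]
    · rcases lt_trichotomy (i : ℕ) (j : ℕ) with h | h | h
      · rw [if_neg (by intro he; rw [he] at h; omega), hvv]
        exact auxw_orth h0 h (by omega)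
      · have : i = j := Fin.ext h
        subst this
        rw [if_pos rfl, hvv]
        exact auxw_norm h0 (by omega)
      · rw [if_neg (by intro he; rw [he] at h; omega), real_inner_comm, hvv]
        exact auxw_orth h0 h (by omega)
    · rw [if_neg (by intro he; rw [he] at hi; exact hj hi)]
      exact hvμ ⟨i, hi⟩
    · rw [if_neg (by intro he; rw [← he] at hj; exact hi hj), real_inner_comm]
      exact hvμ ⟨j, hj⟩
    · rw [if_pos (Fin.ext (by omega))]
      exact hμμ
  -- span
  have hspan : Submodule.span ℝ
      (Set.range (fun i : Fin d => if h : (i : ℕ) < d - 1 then v ⟨i, h⟩ else μ)) = ⊤ := by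
    haveI : Nonempty (Fin d) := Fin.pos_iff_nonempty.mp hd0
    apply LinearIndependent.span_eq_top_of_card_eq_finrank horth.linearIndependent
    simp [finrank_euclideanSpace_fin]
  -- Q conversion
  have hQfin : ∀ K : ℕ, (∑ j : Fin d, if (j : ℕ) ≤ K then μ j ^ 2 else 0) = auxQ d μ' (K + 1) := by
    intro K
    have h1 : (∑ j : Fin d, if (j : ℕ) ≤ K then μ j ^ 2 else 0)
        = ∑ j : Fin d, (fun n => if n < K + 1 then μ' n ^ 2 else 0) (j : ℕ) := by
      refine Finset.sum_congr rfl fun j _ => ?_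
      simp only [Nat.lt_succ_iff, hμ'eq j]
    rw [h1, Fin.sum_univ_eq_sum_range (fun n => if n < K + 1 then μ' n ^ 2 else 0) d]
    rfl
  -- formula
  have hform : ∀ k : Fin (d - 1),
      v k ⟨0, by omega⟩ =
        μ ⟨0, by omega⟩ * |μ ⟨(k : ℕ) + 1, by have := k.isLt; omega⟩| /
          (Real.sqrt (∑ j : Fin d, if (j : ℕ) ≤ (k : ℕ) then μ j ^ 2 else 0) *
           Real.sqrt (∑ j : Fin d, if (j : ℕ) ≤ (k : ℕ) + 1 then μ j ^ 2 else 0)) := by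
    intro k
    have h1 : v k ⟨0, by omega⟩ = auxw d μ' (k : ℕ) 0 := rfl
    rw [h1, auxw_zero, hQfin, hQfin]
    have e0 : μ' 0 = μ ⟨0, by omega⟩ := hμ'eq ⟨0, hd0⟩
    have e1 : μ' ((k : ℕ) + 1) = μ ⟨(k : ℕ) + 1, by have := k.isLt; omega⟩ :=
      hμ'eq ⟨(k : ℕ) + 1, by have := k.isLt; omega⟩
    rw [e0, e1]
  refine ⟨v, hnorm, ?_, horth, hspan, hform⟩
  intro k
  rw [hform k]
  apply div_nonneg (mul_nonneg hμ1.le (abs_nonneg _))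
    (mul_nonneg (Real.sqrt_nonneg _) (Real.sqrt_nonneg _))

end
end

section
/- The following limits hold: lim_{δ→0⁺} ∫₀^∞ δ z^{δ−2}(cos(2πz) − 1) dz = 0 and lim_{δ→0⁺} ∫₀^∞ δ z^{δ−2} sin(2πz) dz = 2π; equivalently, lim_{δ→0⁺} ∫₀^∞ δ z^{δ−2}(e^{2πiz} − 1) dz = 2πi. Moreover, all three limits remain valid when the upper limit of integration ∞ is replaced by 1. -/
open MeasureTheory Filter Topology Real

noncomputable section

namespace SymbAux
open Set

/-- `1 - cos x ≤ x`, for `0 ≤ x`. -/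
lemma one_sub_cos_le_self {x : ℝ} (hx : 0 ≤ x) : 1 - Real.cos x ≤ x := by
  have h2 : Real.cos x = 2 * Real.cos (x / 2) ^ 2 - 1 := by
    rw [show x = 2 * (x / 2) by ring, Real.cos_two_mul]
    ring_nf
  have hpyth := Real.sin_sq_add_cos_sq (x / 2)
  have h1 : |Real.sin (x / 2)| ≤ 1 := abs_le.mpr ⟨Real.neg_one_le_sin _, Real.sin_le_one _⟩
  have h3 : |Real.sin (x / 2)| ≤ x / 2 :=
    (Real.abs_sin_le_abs).trans_eq (abs_of_nonneg (by linarith))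
  nlinarith [sq_abs (Real.sin (x / 2)), abs_nonneg (Real.sin (x / 2))]

/-- `1 - cos x ≤ x^2/2`. -/
lemma one_sub_cos_le_sq (x : ℝ) : 1 - Real.cos x ≤ x ^ 2 / 2 := by
  have h2 : Real.cos x = 2 * Real.cos (x / 2) ^ 2 - 1 := by
    rw [show x = 2 * (x / 2) by ring, Real.cos_two_mul]
    ring_nf
  have hpyth := Real.sin_sq_add_cos_sq (x / 2)
  have h3 : |Real.sin (x / 2)| ≤ |x / 2| := Real.abs_sin_le_abs
  nlinarith [sq_abs (Real.sin (x / 2)), sq_abs (x / 2), abs_nonneg (Real.sin (x / 2)),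
    pow_le_pow_left₀ (abs_nonneg _) h3 2]

/-- `x - sin x ≤ x^2/2`, for `0 ≤ x`. -/
lemma sub_sin_le_sq {x : ℝ} (hx : 0 ≤ x) : x - Real.sin x ≤ x ^ 2 / 2 := by
  have h1 : x - Real.sin x = ∫ t in (0:ℝ)..x, (1 - Real.cos t) := by
    rw [intervalIntegral.integral_sub intervalIntegrable_const
      (Real.continuous_cos.intervalIntegrable _ _)]
    simp [integral_cos]
  have h2 : (∫ t in (0:ℝ)..x, (1 - Real.cos t)) ≤ ∫ t in (0:ℝ)..x, t := by
    apply intervalIntegral.integral_mono_on hx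
      (intervalIntegrable_const.sub (Real.continuous_cos.intervalIntegrable _ _))
      (continuous_id.intervalIntegrable _ _)
    intro t ht
    exact one_sub_cos_le_self ht.1
  have h3 : (∫ t in (0:ℝ)..x, t) = x ^ 2 / 2 := by rw [integral_id]; ring
  linarith


lemma integral_Ioo_rpow {s : ℝ} (hs : -1 < s) :
    ∫ z in Ioo (0:ℝ) 1, z ^ s = 1 / (s + 1) := by
  rw [← integral_Ioc_eq_integral_Ioo, ← intervalIntegral.integral_of_le zero_le_one,
    integral_rpow (Or.inl hs), Real.one_rpow, Real.zero_rpow (by linarith : s + 1 ≠ 0)]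
  ring

lemma integrableOn_Ioo_rpow {s : ℝ} (hs : -1 < s) :
    IntegrableOn (fun z : ℝ => z ^ s) (Ioo (0:ℝ) 1) :=
  ((intervalIntegrable_iff_integrableOn_Ioc_of_le zero_le_one).mp
    (intervalIntegral.intervalIntegrable_rpow' hs)).mono_set Ioo_subset_Ioc_self

lemma aesm_aux (δ : ℝ) {f : ℝ → ℝ} (hf : Continuous f) {s : Set ℝ} (hs : MeasurableSet s)
    (hsub : s ⊆ Ioi (0:ℝ)) :
    AEStronglyMeasurable (fun z : ℝ => δ * z ^ (δ - 2) * f z) (volume.restrict s) := by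
  apply ContinuousOn.aestronglyMeasurable ?_ hs
  apply ContinuousOn.mul ?_ hf.continuousOn
  apply ContinuousOn.mul continuousOn_const
  intro z hz
  exact (Real.continuousAt_rpow_const z _ (Or.inl (ne_of_gt (hsub hz)))).continuousWithinAt

lemma integrableOn_Ioo_aux {δ : ℝ} {f : ℝ → ℝ} (hf : Continuous f)
    {C s : ℝ} (hs : -1 < s)
    (hbound : ∀ z ∈ Ioo (0:ℝ) 1, |δ * z ^ (δ - 2) * f z| ≤ C * z ^ s) :
    IntegrableOn (fun z : ℝ => δ * z ^ (δ - 2) * f z) (Ioo (0:ℝ) 1) := by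
  apply Integrable.mono' ((integrableOn_Ioo_rpow hs).const_mul C)
    (aesm_aux δ hf measurableSet_Ioo (fun z hz => hz.1))
  filter_upwards [ae_restrict_mem measurableSet_Ioo] with z hz
  rw [Real.norm_eq_abs]
  exact hbound z hz

lemma abs_integral_Ioo_le {δ : ℝ} {f : ℝ → ℝ} (hf : Continuous f)
    {C s : ℝ} (hs : -1 < s)
    (hbound : ∀ z ∈ Ioo (0:ℝ) 1, |δ * z ^ (δ - 2) * f z| ≤ C * z ^ s) :
    |∫ z in Ioo (0:ℝ) 1, δ * z ^ (δ - 2) * f z| ≤ C / (s + 1) := by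
  have h := norm_integral_le_of_norm_le ((integrableOn_Ioo_rpow hs).const_mul C)
    (by filter_upwards [ae_restrict_mem measurableSet_Ioo] with z hz using
      (Real.norm_eq_abs _) ▸ hbound z hz)
  rw [Real.norm_eq_abs] at h
  calc |∫ z in Ioo (0:ℝ) 1, δ * z ^ (δ - 2) * f z|
      ≤ ∫ z in Ioo (0:ℝ) 1, C * z ^ s := h
    _ = C * (1 / (s + 1)) := by rw [integral_const_mul, integral_Ioo_rpow hs]
    _ = C / (s + 1) := by ring

lemma rpow_mul_sq {z : ℝ} (hz : 0 < z) (δ : ℝ) : z ^ (δ - 2) * z ^ 2 = z ^ δ := by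
  rw [← Real.rpow_natCast z 2, ← Real.rpow_add hz]
  norm_num

lemma rpow_mul_self {z : ℝ} (hz : 0 < z) (δ : ℝ) : z ^ (δ - 2) * z = z ^ (δ - 1) := by
  rw [show δ - 1 = (δ - 2) + 1 by ring, Real.rpow_add_one hz.ne']


lemma integrableOn_Ioi_aux {δ : ℝ} (hδ : δ ∈ Ioo (0:ℝ) 1) {f : ℝ → ℝ} (hf : Continuous f)
    (hb : ∀ x, |f x| ≤ 2) :
    IntegrableOn (fun z : ℝ => δ * z ^ (δ - 2) * f z) (Ioi (1:ℝ)) := by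
  apply Integrable.mono'
    ((integrableOn_Ioi_rpow_of_lt (by linarith [hδ.2] : δ - 2 < -1) one_pos).const_mul (2 * δ))
    (aesm_aux δ hf measurableSet_Ioi (fun z hz => mem_Ioi.mpr (lt_trans one_pos (mem_Ioi.mp hz))))
  filter_upwards [ae_restrict_mem measurableSet_Ioi] with z hz
  have hz0 : (0:ℝ) < z := lt_trans one_pos hz
  rw [Real.norm_eq_abs, abs_mul, abs_mul, abs_of_nonneg hδ.1.le,
    abs_of_nonneg (Real.rpow_nonneg hz0.le _)]
  calc δ * z ^ (δ - 2) * |f z| ≤ δ * z ^ (δ - 2) * 2 :=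
        mul_le_mul_of_nonneg_left (hb z) (mul_nonneg hδ.1.le (Real.rpow_nonneg hz0.le _))
    _ = 2 * δ * z ^ (δ - 2) := by ring

lemma abs_integral_Ioi_le {δ : ℝ} (hδ : δ ∈ Ioo (0:ℝ) 1) {f : ℝ → ℝ} (hf : Continuous f)
    (hb : ∀ x, |f x| ≤ 2) :
    |∫ z in Ioi (1:ℝ), δ * z ^ (δ - 2) * f z| ≤ 2 * δ / (1 - δ) := by
  have hint := (integrableOn_Ioi_rpow_of_lt (by linarith [hδ.2] : δ - 2 < -1) one_pos).const_mul
    (2 * δ)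
  have hae : ∀ᵐ z ∂(volume.restrict (Ioi (1:ℝ))),
      ‖δ * z ^ (δ - 2) * f z‖ ≤ 2 * δ * z ^ (δ - 2) := by
    filter_upwards [ae_restrict_mem measurableSet_Ioi] with z hz
    have hz0 : (0:ℝ) < z := lt_trans one_pos hz
    rw [Real.norm_eq_abs, abs_mul, abs_mul, abs_of_nonneg hδ.1.le,
      abs_of_nonneg (Real.rpow_nonneg hz0.le _)]
    calc δ * z ^ (δ - 2) * |f z| ≤ δ * z ^ (δ - 2) * 2 :=
          mul_le_mul_of_nonneg_left (hb z) (mul_nonneg hδ.1.le (Real.rpow_nonneg hz0.le _))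
      _ = 2 * δ * z ^ (δ - 2) := by ring
  have h := norm_integral_le_of_norm_le hint hae
  rw [Real.norm_eq_abs] at h
  refine h.trans ?_
  rw [integral_const_mul, integral_Ioi_rpow_of_lt (by linarith [hδ.2] : δ - 2 < -1) one_pos,
    Real.one_rpow, show δ - 2 + 1 = δ - 1 by ring]
  have h1 : (0:ℝ) < 1 - δ := by linarith [hδ.2]
  rw [show 2 * δ * (-1 / (δ - 1)) = 2 * δ / (1 - δ) by
    have h2 : δ - 1 ≠ 0 := by linarith
    have h3 : (1:ℝ) - δ ≠ 0 := by linarith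
    field_simp
    ring]

lemma bound_tendsto_zero (C : ℝ) (g : ℝ → ℝ) (hg : Continuous g) (hg0 : g 0 ≠ 0) :
    Tendsto (fun δ : ℝ => C * δ / g δ) (𝓝[>] 0) (𝓝 0) := by
  have h : ContinuousAt (fun δ : ℝ => C * δ / g δ) 0 :=
    ((continuous_const.mul continuous_id).continuousAt).div hg.continuousAt hg0
  have := h.tendsto.mono_left (nhdsWithin_le_nhds : 𝓝[>] (0:ℝ) ≤ 𝓝 0)
  simpa using this

/-- tail limit: for continuous `f` with `|f| ≤ 2`, the integral over `(1,∞)` tends to `0`. -/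
lemma tail_tendsto {f : ℝ → ℝ} (hf : Continuous f) (hb : ∀ x, |f x| ≤ 2) :
    Tendsto (fun δ : ℝ => ∫ z in Ioi (1:ℝ), δ * z ^ (δ - 2) * f z) (𝓝[>] 0) (𝓝 0) := by
  apply squeeze_zero_norm' ?_ (bound_tendsto_zero 2 (fun δ => 1 - δ)
    (by continuity) (by norm_num))
  filter_upwards [Ioo_mem_nhdsGT_of_mem (by norm_num : (0:ℝ) ∈ Ico (0:ℝ) 1)] with δ hδ
  rw [Real.norm_eq_abs]
  exact abs_integral_Ioi_le hδ hf hb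


lemma cos_bound {δ z : ℝ} (hδ : δ ∈ Ioo (0:ℝ) 1) (hz : z ∈ Ioo (0:ℝ) 1) :
    |δ * z ^ (δ - 2) * (Real.cos (2 * π * z) - 1)| ≤ 2 * π ^ 2 * δ * z ^ δ := by
  have hz0 := hz.1
  have h1 : |Real.cos (2 * π * z) - 1| = 1 - Real.cos (2 * π * z) := by
    rw [abs_of_nonpos (by linarith [Real.cos_le_one (2 * π * z)])]; ring
  rw [abs_mul, abs_mul, abs_of_nonneg hδ.1.le, abs_of_nonneg (Real.rpow_nonneg hz0.le _), h1]
  calc δ * z ^ (δ - 2) * (1 - Real.cos (2 * π * z))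
      ≤ δ * z ^ (δ - 2) * ((2 * π * z) ^ 2 / 2) :=
        mul_le_mul_of_nonneg_left (one_sub_cos_le_sq _)
          (mul_nonneg hδ.1.le (Real.rpow_nonneg hz0.le _))
    _ = 2 * π ^ 2 * δ * z ^ δ := by rw [← rpow_mul_sq hz0 δ]; ring

lemma sin_err_bound {δ z : ℝ} (hδ : δ ∈ Ioo (0:ℝ) 1) (hz : z ∈ Ioo (0:ℝ) 1) :
    |δ * z ^ (δ - 2) * (Real.sin (2 * π * z) - 2 * π * z)| ≤ 2 * π ^ 2 * δ * z ^ δ := by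
  have hz0 := hz.1
  have hx : (0:ℝ) ≤ 2 * π * z := by positivity
  have h1 : |Real.sin (2 * π * z) - 2 * π * z| = 2 * π * z - Real.sin (2 * π * z) := by
    rw [abs_of_nonpos (by linarith [Real.sin_le hx])]; ring
  rw [abs_mul, abs_mul, abs_of_nonneg hδ.1.le, abs_of_nonneg (Real.rpow_nonneg hz0.le _), h1]
  calc δ * z ^ (δ - 2) * (2 * π * z - Real.sin (2 * π * z))
      ≤ δ * z ^ (δ - 2) * ((2 * π * z) ^ 2 / 2) :=
        mul_le_mul_of_nonneg_left (sub_sin_le_sq hx)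
          (mul_nonneg hδ.1.le (Real.rpow_nonneg hz0.le _))
    _ = 2 * π ^ 2 * δ * z ^ δ := by rw [← rpow_mul_sq hz0 δ]; ring

lemma sin_bound {δ z : ℝ} (hδ : δ ∈ Ioo (0:ℝ) 1) (hz : z ∈ Ioo (0:ℝ) 1) :
    |δ * z ^ (δ - 2) * Real.sin (2 * π * z)| ≤ 2 * π * δ * z ^ (δ - 1) := by
  have hz0 := hz.1
  have hx : (0:ℝ) ≤ 2 * π * z := by positivity
  have h1 : |Real.sin (2 * π * z)| ≤ 2 * π * z :=
    Real.abs_sin_le_abs.trans_eq (abs_of_nonneg hx)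
  rw [abs_mul, abs_mul, abs_of_nonneg hδ.1.le, abs_of_nonneg (Real.rpow_nonneg hz0.le _)]
  calc δ * z ^ (δ - 2) * |Real.sin (2 * π * z)|
      ≤ δ * z ^ (δ - 2) * (2 * π * z) :=
        mul_le_mul_of_nonneg_left h1 (mul_nonneg hδ.1.le (Real.rpow_nonneg hz0.le _))
    _ = 2 * π * δ * z ^ (δ - 1) := by rw [← rpow_mul_self hz0 δ]; ring

lemma integrableOn_cos_Ioo {δ : ℝ} (hδ : δ ∈ Ioo (0:ℝ) 1) :
    IntegrableOn (fun z : ℝ => δ * z ^ (δ - 2) * (Real.cos (2 * π * z) - 1)) (Ioo (0:ℝ) 1) :=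
  integrableOn_Ioo_aux (by continuity) (by linarith [hδ.1] : (-1:ℝ) < δ)
    (fun z hz => cos_bound hδ hz)

lemma integrableOn_sin_Ioo {δ : ℝ} (hδ : δ ∈ Ioo (0:ℝ) 1) :
    IntegrableOn (fun z : ℝ => δ * z ^ (δ - 2) * Real.sin (2 * π * z)) (Ioo (0:ℝ) 1) :=
  integrableOn_Ioo_aux (by continuity) (by linarith [hδ.1] : (-1:ℝ) < δ - 1)
    (fun z hz => sin_bound hδ hz)

lemma cos_Ioo_tendsto :
    Tendsto (fun δ : ℝ => ∫ z in Ioo (0:ℝ) 1, δ * z ^ (δ - 2) * (Real.cos (2 * π * z) - 1))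
      (𝓝[>] 0) (𝓝 0) := by
  apply squeeze_zero_norm' ?_ (bound_tendsto_zero (2 * π ^ 2) (fun δ => δ + 1)
    (by continuity) (by norm_num))
  filter_upwards [Ioo_mem_nhdsGT_of_mem (by norm_num : (0:ℝ) ∈ Ico (0:ℝ) 1)] with δ hδ
  rw [Real.norm_eq_abs]
  have h := abs_integral_Ioo_le (f := fun z => Real.cos (2 * π * z) - 1) (by continuity)
    (by linarith [hδ.1] : (-1:ℝ) < δ) (fun z hz => cos_bound hδ hz)
  calc |∫ z in Ioo (0:ℝ) 1, δ * z ^ (δ - 2) * (Real.cos (2 * π * z) - 1)|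
      ≤ 2 * π ^ 2 * δ / (δ + 1) := h
    _ = 2 * π ^ 2 * δ / (δ + 1) := rfl

lemma sin_Ioo_eq {δ : ℝ} (hδ : δ ∈ Ioo (0:ℝ) 1) :
    ∫ z in Ioo (0:ℝ) 1, δ * z ^ (δ - 2) * Real.sin (2 * π * z)
      = 2 * π + ∫ z in Ioo (0:ℝ) 1, δ * z ^ (δ - 2) * (Real.sin (2 * π * z) - 2 * π * z) := by
  have hδ1 : (-1:ℝ) < δ - 1 := by linarith [hδ.1]
  have hint1 : IntegrableOn (fun z : ℝ => (2 * π * δ) * z ^ (δ - 1)) (Ioo (0:ℝ) 1) :=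
    (integrableOn_Ioo_rpow hδ1).const_mul _
  have hint2 : IntegrableOn
      (fun z : ℝ => δ * z ^ (δ - 2) * (Real.sin (2 * π * z) - 2 * π * z)) (Ioo (0:ℝ) 1) :=
    integrableOn_Ioo_aux (by continuity) (by linarith [hδ.1] : (-1:ℝ) < δ)
      (fun z hz => sin_err_bound hδ hz)
  have heq : EqOn (fun z : ℝ => δ * z ^ (δ - 2) * Real.sin (2 * π * z))
      (fun z : ℝ => (2 * π * δ) * z ^ (δ - 1)
        + δ * z ^ (δ - 2) * (Real.sin (2 * π * z) - 2 * π * z)) (Ioo (0:ℝ) 1) := by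
    intro z hz
    simp only
    rw [← rpow_mul_self hz.1 δ]
    ring
  rw [setIntegral_congr_fun measurableSet_Ioo heq, integral_add hint1 hint2, integral_const_mul,
    integral_Ioo_rpow hδ1, show δ - 1 + 1 = δ by ring]
  have hδ0 : δ ≠ 0 := hδ.1.ne'
  field_simp

lemma sin_Ioo_tendsto :
    Tendsto (fun δ : ℝ => ∫ z in Ioo (0:ℝ) 1, δ * z ^ (δ - 2) * Real.sin (2 * π * z))
      (𝓝[>] 0) (𝓝 (2 * π)) := by
  have herr : Tendsto (fun δ : ℝ =>
      ∫ z in Ioo (0:ℝ) 1, δ * z ^ (δ - 2) * (Real.sin (2 * π * z) - 2 * π * z))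
      (𝓝[>] 0) (𝓝 0) := by
    apply squeeze_zero_norm' ?_ (bound_tendsto_zero (2 * π ^ 2) (fun δ => δ + 1)
      (by continuity) (by norm_num))
    filter_upwards [Ioo_mem_nhdsGT_of_mem (by norm_num : (0:ℝ) ∈ Ico (0:ℝ) 1)] with δ hδ
    rw [Real.norm_eq_abs]
    exact abs_integral_Ioo_le (f := fun z => Real.sin (2 * π * z) - 2 * π * z) (by continuity)
      (by linarith [hδ.1] : (-1:ℝ) < δ) (fun z hz => sin_err_bound hδ hz)
  have h := (herr.const_add (2 * π))
  rw [add_zero] at h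
  apply h.congr'
  filter_upwards [Ioo_mem_nhdsGT_of_mem (by norm_num : (0:ℝ) ∈ Ico (0:ℝ) 1)] with δ hδ
  exact (sin_Ioo_eq hδ).symm


lemma disj_Ioc_Ioi : Disjoint (Ioc (0:ℝ) 1) (Ioi (1:ℝ)) := by
  rw [Set.disjoint_left]
  rintro x ⟨_, hx1⟩ hx2
  exact absurd hx1 (not_le.mpr hx2)

lemma integrableOn_Ioi0 {F : ℝ → ℝ} (h1 : IntegrableOn F (Ioo (0:ℝ) 1))
    (h2 : IntegrableOn F (Ioi (1:ℝ))) : IntegrableOn F (Ioi (0:ℝ)) := by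
  rw [← Ioc_union_Ioi_eq_Ioi (zero_le_one (α := ℝ))]
  exact integrableOn_union.mpr ⟨(integrableOn_Ioc_iff_integrableOn_Ioo).mpr h1, h2⟩

lemma split_eq {F : ℝ → ℝ} (h1 : IntegrableOn F (Ioo (0:ℝ) 1))
    (h2 : IntegrableOn F (Ioi (1:ℝ))) :
    ∫ z in Ioi (0:ℝ), F z = (∫ z in Ioo (0:ℝ) 1, F z) + ∫ z in Ioi (1:ℝ), F z := by
  rw [← Ioc_union_Ioi_eq_Ioi (zero_le_one (α := ℝ)),
    setIntegral_union disj_Ioc_Ioi measurableSet_Ioi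
      ((integrableOn_Ioc_iff_integrableOn_Ioo).mpr h1) h2,
    integral_Ioc_eq_integral_Ioo]

lemma cos_abs_le (x : ℝ) : |Real.cos (2 * π * x) - 1| ≤ 2 :=
  abs_le.mpr ⟨by linarith [Real.neg_one_le_cos (2 * π * x)],
    by linarith [Real.cos_le_one (2 * π * x)]⟩

lemma sin_abs_le (x : ℝ) : |Real.sin (2 * π * x)| ≤ 2 :=
  (abs_le.mpr ⟨Real.neg_one_le_sin _, Real.sin_le_one _⟩).trans one_le_two

lemma cos_Ioi0_tendsto :
    Tendsto (fun δ : ℝ => ∫ z in Ioi (0:ℝ), δ * z ^ (δ - 2) * (Real.cos (2 * π * z) - 1))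
      (𝓝[>] 0) (𝓝 0) := by
  have h := cos_Ioo_tendsto.add
    (tail_tendsto (f := fun z => Real.cos (2 * π * z) - 1) (by continuity) cos_abs_le)
  rw [add_zero] at h
  apply h.congr'
  filter_upwards [Ioo_mem_nhdsGT_of_mem (by norm_num : (0:ℝ) ∈ Ico (0:ℝ) 1)] with δ hδ
  exact (split_eq (integrableOn_cos_Ioo hδ)
    (integrableOn_Ioi_aux hδ (by continuity) cos_abs_le)).symm

lemma sin_Ioi0_tendsto :
    Tendsto (fun δ : ℝ => ∫ z in Ioi (0:ℝ), δ * z ^ (δ - 2) * Real.sin (2 * π * z))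
      (𝓝[>] 0) (𝓝 (2 * π)) := by
  have h := sin_Ioo_tendsto.add
    (tail_tendsto (f := fun z => Real.sin (2 * π * z)) (by continuity) sin_abs_le)
  rw [add_zero] at h
  apply h.congr'
  filter_upwards [Ioo_mem_nhdsGT_of_mem (by norm_num : (0:ℝ) ∈ Ico (0:ℝ) 1)] with δ hδ
  exact (split_eq (integrableOn_sin_Ioo hδ)
    (integrableOn_Ioi_aux hδ (by continuity) sin_abs_le)).symm

lemma complex_pointwise (δ z : ℝ) :
    ((δ * z ^ (δ - 2) : ℝ) : ℂ) * (Complex.exp (((2 * π * z : ℝ) : ℂ) * Complex.I) - 1)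
      = ((δ * z ^ (δ - 2) * (Real.cos (2 * π * z) - 1) : ℝ) : ℂ)
        + ((δ * z ^ (δ - 2) * Real.sin (2 * π * z) : ℝ) : ℂ) * Complex.I := by
  rw [Complex.exp_mul_I, ← Complex.ofReal_cos, ← Complex.ofReal_sin]
  push_cast
  ring

lemma complex_integral_eq {δ : ℝ} {s : Set ℝ}
    (h1 : IntegrableOn (fun z : ℝ => δ * z ^ (δ - 2) * (Real.cos (2 * π * z) - 1)) s)
    (h2 : IntegrableOn (fun z : ℝ => δ * z ^ (δ - 2) * Real.sin (2 * π * z)) s) :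
    ∫ z in s, ((δ * z ^ (δ - 2) : ℝ) : ℂ) * (Complex.exp (((2 * π * z : ℝ) : ℂ) * Complex.I) - 1)
      = ((∫ z in s, δ * z ^ (δ - 2) * (Real.cos (2 * π * z) - 1) : ℝ) : ℂ)
        + ((∫ z in s, δ * z ^ (δ - 2) * Real.sin (2 * π * z) : ℝ) : ℂ) * Complex.I := by
  have i1 : Integrable (fun z : ℝ =>
      ((δ * z ^ (δ - 2) * (Real.cos (2 * π * z) - 1) : ℝ) : ℂ)) (volume.restrict s) :=
    h1.ofReal
  have i2 : Integrable (fun z : ℝ =>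
      ((δ * z ^ (δ - 2) * Real.sin (2 * π * z) : ℝ) : ℂ) * Complex.I) (volume.restrict s) :=
    h2.ofReal.mul_const Complex.I
  have e1 : ∀ (g : ℝ → ℝ), ∫ z in s, ((g z : ℝ) : ℂ) = ((∫ z in s, g z : ℝ) : ℂ) :=
    fun g => integral_ofReal
  simp_rw [complex_pointwise]
  rw [integral_add i1 i2, integral_mul_const, e1, e1]

lemma complex_Ioo_tendsto :
    Tendsto (fun δ : ℝ => ∫ z in Ioo (0:ℝ) 1,
        ((δ * z ^ (δ - 2) : ℝ) : ℂ) * (Complex.exp (((2 * π * z : ℝ) : ℂ) * Complex.I) - 1))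
      (𝓝[>] 0) (𝓝 (((2 * π : ℝ) : ℂ) * Complex.I)) := by
  have h := ((Complex.continuous_ofReal.tendsto 0).comp cos_Ioo_tendsto).add
    (((Complex.continuous_ofReal.tendsto (2 * π)).comp sin_Ioo_tendsto).mul_const Complex.I)
  rw [Complex.ofReal_zero, zero_add] at h
  apply h.congr'
  filter_upwards [Ioo_mem_nhdsGT_of_mem (by norm_num : (0:ℝ) ∈ Ico (0:ℝ) 1)] with δ hδ
  exact (complex_integral_eq (integrableOn_cos_Ioo hδ) (integrableOn_sin_Ioo hδ)).symm

lemma complex_Ioi0_tendsto :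
    Tendsto (fun δ : ℝ => ∫ z in Ioi (0:ℝ),
        ((δ * z ^ (δ - 2) : ℝ) : ℂ) * (Complex.exp (((2 * π * z : ℝ) : ℂ) * Complex.I) - 1))
      (𝓝[>] 0) (𝓝 (((2 * π : ℝ) : ℂ) * Complex.I)) := by
  have h := ((Complex.continuous_ofReal.tendsto 0).comp cos_Ioi0_tendsto).add
    (((Complex.continuous_ofReal.tendsto (2 * π)).comp sin_Ioi0_tendsto).mul_const Complex.I)
  rw [Complex.ofReal_zero, zero_add] at h
  apply h.congr'
  filter_upwards [Ioo_mem_nhdsGT_of_mem (by norm_num : (0:ℝ) ∈ Ico (0:ℝ) 1)] with δ hδ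
  exact (complex_integral_eq
    (integrableOn_Ioi0 (integrableOn_cos_Ioo hδ) (integrableOn_Ioi_aux hδ (by continuity) cos_abs_le))
    (integrableOn_Ioi0 (integrableOn_sin_Ioo hδ) (integrableOn_Ioi_aux hδ (by continuity) sin_abs_le))).symm

end SymbAux

/-- Proposition A.3: the limits
`lim_{δ→0⁺} ∫₀^∞ δ z^{δ-2}(cos(2πz) − 1) dz = 0`,
`lim_{δ→0⁺} ∫₀^∞ δ z^{δ-2} sin(2πz) dz = 2π`, and
`lim_{δ→0⁺} ∫₀^∞ δ z^{δ-2}(e^{2πiz} − 1) dz = 2πi`,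
together with the same limits when the upper limit `∞` is replaced by `1`. -/
theorem symb_limits :
    Tendsto (fun δ : ℝ =>
        ∫ z in Set.Ioi (0 : ℝ), δ * z ^ (δ - 2 : ℝ) * (Real.cos (2 * π * z) - 1))
      (𝓝[>] (0 : ℝ)) (𝓝 0) ∧
    Tendsto (fun δ : ℝ =>
        ∫ z in Set.Ioi (0 : ℝ), δ * z ^ (δ - 2 : ℝ) * Real.sin (2 * π * z))
      (𝓝[>] (0 : ℝ)) (𝓝 (2 * π)) ∧
    Tendsto (fun δ : ℝ =>
        ∫ z in Set.Ioi (0 : ℝ),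
          ((δ * z ^ (δ - 2 : ℝ) : ℝ) : ℂ) *
            (Complex.exp (((2 * π * z : ℝ) : ℂ) * Complex.I) - 1))
      (𝓝[>] (0 : ℝ)) (𝓝 (((2 * π : ℝ) : ℂ) * Complex.I)) ∧
    Tendsto (fun δ : ℝ =>
        ∫ z in Set.Ioo (0 : ℝ) 1, δ * z ^ (δ - 2 : ℝ) * (Real.cos (2 * π * z) - 1))
      (𝓝[>] (0 : ℝ)) (𝓝 0) ∧
    Tendsto (fun δ : ℝ =>
        ∫ z in Set.Ioo (0 : ℝ) 1, δ * z ^ (δ - 2 : ℝ) * Real.sin (2 * π * z))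
      (𝓝[>] (0 : ℝ)) (𝓝 (2 * π)) ∧
    Tendsto (fun δ : ℝ =>
        ∫ z in Set.Ioo (0 : ℝ) 1,
          ((δ * z ^ (δ - 2 : ℝ) : ℝ) : ℂ) *
            (Complex.exp (((2 * π * z : ℝ) : ℂ) * Complex.I) - 1))
      (𝓝[>] (0 : ℝ)) (𝓝 (((2 * π : ℝ) : ℂ) * Complex.I)) := by
  exact ⟨SymbAux.cos_Ioi0_tendsto, SymbAux.sin_Ioi0_tendsto, SymbAux.complex_Ioi0_tendsto,
    SymbAux.cos_Ioo_tendsto, SymbAux.sin_Ioo_tendsto, SymbAux.complex_Ioo_tendsto⟩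

end
end
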